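/- For −1/2 < s < 0, u a Schwartz function, and f(ξ) = |û(ξ)|², one has ‖u‖²_{H^s} = −(2 sin(πs)/π) ∫₁^∞ (τ²−1)^s Re T₂(iτ/2) dτ, where T₂(z) = i ∫_ℝ (2z+ξ)^{-1} f(ξ) dξ. (In particular the integral on the right converges absolutely.) -/

import Mathlib

open MeasureTheory Complex

/-- The unitary Fourier transform `û(ξ) = (2π)^{-1/2} ∫ u(x) e^{-ixξ} dx`. -/
noncomputable def unitaryFT (u : ℝ → ℂ) (ξ : ℝ) : ℂ :=
  ((Real.sqrt (2 * Real.pi) : ℝ) : ℂ)⁻¹ *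
    ∫ x : ℝ, Complex.exp (-(Complex.I * (x : ℂ) * (ξ : ℂ))) * u x

/-- The quadratic term `T₂(z) = i ∫ (2z+ξ)⁻¹ |û(ξ)|² dξ`. -/
noncomputable def T₂ (u : ℝ → ℂ) (z : ℂ) : ℂ :=
  Complex.I * ∫ ξ : ℝ, (2 * z + (ξ : ℂ))⁻¹ * ((‖unitaryFT u ξ‖ ^ 2 : ℝ) : ℂ)

/-!
Write `f = |û|²`. Then `Re T₂(iτ/2) = ∫ τ/(ξ²+τ²) f(ξ) dξ` is a Poisson integral of `f`, and since
the kernel `(τ²−1)^s τ/(ξ²+τ²)` is nonnegative with τ-integral bounded in `ξ`, Fubini lets us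
integrate in `τ` first. The substitution `t = τ² − 1` turns that integral into
`½ ∫₀^∞ t^s/(t + 1 + ξ²) dt = ½ (1+ξ²)^s π / sin(π(s+1))`, a Beta integral evaluated by the
reflection formula `Γ(z)Γ(1−z) = π / sin(πz)`; finally `sin(π(s+1)) = −sin(πs)`.
-/

open Set Filter
open scoped Real

section Substitution

variable {E : Type*} [NormedAddCommGroup E] [NormedSpace ℝ E]

theorem integral_comp_div_one_sub_Ioo (g : ℝ → E) :
    ∫ x in Ioo (0 : ℝ) 1, ((1 - x) ^ 2)⁻¹ • g (x / (1 - x)) = ∫ t in Ioi 0, g t := by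
  have himage : (fun x : ℝ => x / (1 - x)) '' Ioo 0 1 = Ioi 0 := by
    ext t
    refine ⟨fun ⟨x, ⟨hx0, hx1⟩, hxt⟩ => hxt ▸ div_pos hx0 (sub_pos.2 hx1), fun ht => ?_⟩
    have ht0 : (0 : ℝ) < t := ht
    refine ⟨t / (1 + t), ⟨by positivity, (div_lt_one (by positivity)).2 (by linarith)⟩, ?_⟩
    field_simp
    ring
  have hderiv : ∀ x ∈ Ioo (0 : ℝ) 1,
      HasDerivWithinAt (fun x : ℝ => x / (1 - x)) ((1 - x) ^ 2)⁻¹ (Ioo 0 1) x := by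
    intro x hx
    have hx1 : 1 - x ≠ 0 := (sub_pos.2 hx.2).ne'
    refine (((hasDerivAt_id x).div ((hasDerivAt_const x 1).sub (hasDerivAt_id x)) hx1).congr_deriv
      ?_).hasDerivWithinAt
    simp only [Pi.sub_apply, id]
    field_simp
    ring
  have hinj : InjOn (fun x : ℝ => x / (1 - x)) (Ioo 0 1) := by
    intro a ha b hb hab
    have ha1 : 1 - a ≠ 0 := (sub_pos.2 ha.2).ne'
    have hb1 : 1 - b ≠ 0 := (sub_pos.2 hb.2).ne'
    field_simp at hab
    linarith
  rw [← himage, integral_image_eq_integral_abs_deriv_smul measurableSet_Ioo hderiv hinj]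
  exact setIntegral_congr_fun measurableSet_Ioo fun x _ => by rw [abs_of_nonneg (by positivity)]

theorem integral_comp_sq_sub_one_Ioi (g : ℝ → E) :
    ∫ x in Ioi (1 : ℝ), (2 * x) • g (x ^ 2 - 1) = ∫ t in Ioi 0, g t := by
  have himage : (fun x : ℝ => x ^ 2 - 1) '' Ioi 1 = Ioi 0 := by
    ext t
    refine ⟨fun ⟨x, hx, hxt⟩ => ?_, fun ht => ?_⟩
    · have hx1 : (1 : ℝ) < x := hx
      rw [← hxt, mem_Ioi]
      nlinarith
    · have ht0 : (0 : ℝ) < t := ht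
      refine ⟨√(1 + t), ?_, ?_⟩
      · exact (Real.lt_sqrt zero_le_one).2 (by linarith)
      · dsimp only
        rw [Real.sq_sqrt (by linarith)]
        ring
  have hderiv : ∀ x ∈ Ioi (1 : ℝ),
      HasDerivWithinAt (fun x : ℝ => x ^ 2 - 1) (2 * x) (Ioi 1) x := fun x _ => by
    simpa using ((hasDerivAt_pow 2 x).sub_const 1).hasDerivWithinAt
  have hinj : InjOn (fun x : ℝ => x ^ 2 - 1) (Ioi 1) := by
    intro a ha b hb hab
    have ha1 : (1 : ℝ) < a := ha
    have hb1 : (1 : ℝ) < b := hb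
    nlinarith [sq_nonneg (a - b)]
  rw [← himage, integral_image_eq_integral_abs_deriv_smul measurableSet_Ioi hderiv hinj]
  refine setIntegral_congr_fun measurableSet_Ioi fun x hx => ?_
  have hx1 : (1 : ℝ) < x := hx
  rw [abs_of_pos (by linarith)]

end Substitution

theorem integral_Ioo_rpow_mul_one_sub_rpow {a b : ℝ} (ha : 0 < a) (hb : 0 < b) :
    ∫ x in Ioo (0 : ℝ) 1, x ^ (a - 1) * (1 - x) ^ (b - 1)
      = Real.Gamma a * Real.Gamma b / Real.Gamma (a + b) := by
  have hbeta := Complex.betaIntegral_eq_Gamma_mul_div a b (by simpa) (by simpa)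
  rw [Complex.betaIntegral, intervalIntegral.integral_of_le zero_le_one,
    integral_Ioc_eq_integral_Ioo] at hbeta
  apply Complex.ofReal_injective
  rw [← integral_complex_ofReal]
  push_cast [← Complex.Gamma_ofReal]
  rw [← hbeta]
  refine setIntegral_congr_fun measurableSet_Ioo fun x hx => ?_
  rw [Complex.ofReal_cpow hx.1.le, Complex.ofReal_cpow (sub_pos.2 hx.2).le]
  push_cast
  ring_nf

theorem sin_pi_mul_add_one_pos {s : ℝ} (h1 : -1 < s) (h2 : s < 0) :
    0 < Real.sin (π * (s + 1)) :=
  Real.sin_pos_of_pos_of_lt_pi (by nlinarith [Real.pi_pos]) (by nlinarith [Real.pi_pos])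

theorem integral_rpow_div_add_one {s : ℝ} (h1 : -1 < s) (h2 : s < 0) :
    ∫ t in Ioi (0 : ℝ), t ^ s / (t + 1) = π / Real.sin (π * (s + 1)) := by
  rw [← integral_comp_div_one_sub_Ioo]
  have hbeta :=
    integral_Ioo_rpow_mul_one_sub_rpow (a := s + 1) (b := -s) (by linarith) (by linarith)
  rw [show s + 1 + -s = 1 by ring, Real.Gamma_one, div_one, show -s = 1 - (s + 1) by ring,
    Real.Gamma_mul_Gamma_one_sub] at hbeta
  rw [← hbeta]
  refine setIntegral_congr_fun measurableSet_Ioo fun x ⟨hx0, hx1⟩ => ?_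
  have h1x : 0 < 1 - x := sub_pos.2 hx1
  have hsum : x / (1 - x) + 1 = (1 - x)⁻¹ := by field_simp; ring
  rw [smul_eq_mul, hsum, Real.div_rpow hx0.le h1x.le, show s + 1 - 1 = s by ring,
    show 1 - (s + 1) - 1 = -s + (-1) by ring, Real.rpow_add h1x, Real.rpow_neg h1x.le,
    Real.rpow_neg_one]
  have : (1 - x) ^ s ≠ 0 := (Real.rpow_pos_of_pos h1x s).ne'
  field_simp

theorem integral_rpow_div_add {s a : ℝ} (h1 : -1 < s) (h2 : s < 0) (ha : 0 < a) :
    ∫ t in Ioi (0 : ℝ), t ^ s / (t + a) = a ^ s * (π / Real.sin (π * (s + 1))) := by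
  have hscale := integral_comp_mul_right_Ioi (fun t : ℝ => t ^ s / (t + a)) 0 ha
  rw [zero_mul, smul_eq_mul, eq_inv_mul_iff_mul_eq₀ ha.ne'] at hscale
  rw [← hscale, ← integral_rpow_div_add_one h1 h2, ← integral_const_mul, ← integral_const_mul]
  refine setIntegral_congr_fun measurableSet_Ioi fun t ht => ?_
  have ht0 : (0 : ℝ) < t := ht
  rw [Real.mul_rpow ht0.le ha.le]
  field_simp

theorem integral_sq_sub_one_rpow_mul_div_add_sq {s : ℝ} (h1 : -1 < s) (h2 : s < 0) (ξ : ℝ) :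
    ∫ τ in Ioi (1 : ℝ), (τ ^ 2 - 1) ^ s * (τ / (ξ ^ 2 + τ ^ 2))
      = (1 + ξ ^ 2) ^ s * (π / Real.sin (π * (s + 1))) / 2 := by
  rw [← integral_rpow_div_add h1 h2 (by positivity), ← integral_comp_sq_sub_one_Ioi,
    ← integral_div]
  refine setIntegral_congr_fun measurableSet_Ioi fun τ hτ => ?_
  have hτ0 : (0 : ℝ) < τ := lt_trans one_pos hτ
  rw [smul_eq_mul, show τ ^ 2 - 1 + (1 + ξ ^ 2) = ξ ^ 2 + τ ^ 2 by ring]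
  field_simp

theorem integrableOn_sq_sub_one_rpow_mul_div_add_sq {s : ℝ} (h1 : -1 < s) (h2 : s < 0) (ξ : ℝ) :
    IntegrableOn (fun τ : ℝ => (τ ^ 2 - 1) ^ s * (τ / (ξ ^ 2 + τ ^ 2))) (Ioi 1) := by
  have hsin := sin_pi_mul_add_one_pos h1 h2
  -- the Bochner integral of a non-integrable function is `0`
  refine Integrable.of_integral_ne_zero ?_
  rw [integral_sq_sub_one_rpow_mul_div_add_sq h1 h2]
  positivity

theorem unitaryFT_eq_fourier (u : SchwartzMap ℝ ℂ) (ξ : ℝ) :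
    unitaryFT u ξ = ((√(2 * π) : ℝ) : ℂ)⁻¹ * FourierTransform.fourier u (ξ / (2 * π)) := by
  rw [unitaryFT, SchwartzMap.fourier_coe, Real.fourier_real_eq_integral_exp_smul]
  congr 1
  refine integral_congr_ae (Eventually.of_forall fun x => ?_)
  dsimp only
  rw [smul_eq_mul, show -2 * π * x * (ξ / (2 * π)) = -x * ξ by field_simp]
  push_cast
  ring_nf

theorem integrable_norm_unitaryFT_sq (u : SchwartzMap ℝ ℂ) :
    Integrable fun ξ => ‖unitaryFT u ξ‖ ^ 2 := by
  have h := ((((FourierTransform.fourier u).memLp 2).integrable_norm_pow two_ne_zero).comp_div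
    (by positivity : 2 * π ≠ 0)).const_mul (‖((√(2 * π) : ℝ) : ℂ)⁻¹‖ ^ 2)
  simpa only [unitaryFT_eq_fourier, norm_mul, mul_pow] using h

theorem re_T₂_I_mul_div_two {u : ℝ → ℂ} (hu : Integrable fun ξ => ‖unitaryFT u ξ‖ ^ 2) {τ : ℝ}
    (hτ : τ ≠ 0) :
    (T₂ u (I * τ / 2)).re = ∫ ξ, τ / (ξ ^ 2 + τ ^ 2) * ‖unitaryFT u ξ‖ ^ 2 := by
  have hne : ∀ ξ : ℝ, I * τ + ξ ≠ 0 := fun ξ h => hτ (by simpa using congrArg im h)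
  have hint : Integrable fun ξ : ℝ => (I * τ + ξ)⁻¹ * ((‖unitaryFT u ξ‖ ^ 2 : ℝ) : ℂ) := by
    refine hu.ofReal.bdd_mul (c := |τ|⁻¹) ?_ (Eventually.of_forall fun ξ => ?_)
    · exact ((continuous_const.add continuous_ofReal).inv₀ hne).aestronglyMeasurable
    · rw [norm_inv]
      exact inv_anti₀ (abs_pos.2 hτ) (by simpa using abs_im_le_norm (I * τ + ξ))
  rw [T₂, show 2 * (I * τ / 2) = I * τ by ring, ← integral_const_mul, ← RCLike.re_to_complex,
    ← integral_re (hint.const_mul I)]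
  refine integral_congr_ae (Eventually.of_forall fun ξ => ?_)
  have hnormSq : normSq (I * τ + ξ) = ξ ^ 2 + τ ^ 2 := by
    rw [add_comm, mul_comm, normSq_add_mul_I]
  dsimp only
  rw [RCLike.re_to_complex, ← mul_assoc, re_mul_ofReal, I_mul_re, inv_im, hnormSq,
    add_im, I_mul_im, ofReal_re, ofReal_im, add_zero, neg_div, neg_neg]

theorem integral_Ioi_one_sq_sub_one_rpow_mul_integral {f : ℝ → ℝ} (hf : Integrable f) {s : ℝ}
    (h1 : -1 < s) (h2 : s < 0) :
    IntegrableOn (fun τ : ℝ => (τ ^ 2 - 1) ^ s * ∫ ξ, τ / (ξ ^ 2 + τ ^ 2) * f ξ) (Ioi 1) ∧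
      ∫ τ in Ioi (1 : ℝ), (τ ^ 2 - 1) ^ s * ∫ ξ, τ / (ξ ^ 2 + τ ^ 2) * f ξ
        = π / Real.sin (π * (s + 1)) / 2 * ∫ ξ, (1 + ξ ^ 2) ^ s * f ξ := by
  set K : ℝ → ℝ → ℝ := fun τ ξ => (τ ^ 2 - 1) ^ s * (τ / (ξ ^ 2 + τ ^ 2))
  set c : ℝ := π / Real.sin (π * (s + 1)) / 2
  have hc : 0 < c := by
    have := sin_pi_mul_add_one_pos h1 h2
    positivity
  have hK_nonneg : ∀ ξ, ∀ τ ∈ Ioi (1 : ℝ), 0 ≤ K τ ξ := fun ξ τ hτ => by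
    have hτ1 : (1 : ℝ) < τ := hτ
    have : 0 ≤ (τ ^ 2 - 1) ^ s := Real.rpow_nonneg (by nlinarith) s
    positivity
  have hK_integral : ∀ ξ, ∫ τ in Ioi (1 : ℝ), K τ ξ = c * (1 + ξ ^ 2) ^ s := fun ξ => by
    rw [integral_sq_sub_one_rpow_mul_div_add_sq h1 h2]
    ring
  have hF_meas : AEStronglyMeasurable (fun p : ℝ × ℝ => K p.1 p.2 * f p.2)
      ((volume.restrict (Ioi 1)).prod volume) :=
    (by fun_prop : Measurable fun p : ℝ × ℝ => K p.1 p.2).aestronglyMeasurable.mul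
      hf.aestronglyMeasurable.comp_snd
  have hF : Integrable (fun p : ℝ × ℝ => K p.1 p.2 * f p.2)
      ((volume.restrict (Ioi 1)).prod volume) := by
    refine (integrable_prod_iff' hF_meas).2
      ⟨Eventually.of_forall fun ξ => (integrableOn_sq_sub_one_rpow_mul_div_add_sq h1 h2 ξ).mul_const
        (f ξ), ?_⟩
    have hnorm : ∀ ξ, ∫ τ in Ioi (1 : ℝ), ‖K τ ξ * f ξ‖ = c * (1 + ξ ^ 2) ^ s * ‖f ξ‖ := fun ξ => by
      rw [← hK_integral, ← integral_mul_const]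
      refine setIntegral_congr_fun measurableSet_Ioi fun τ hτ => ?_
      rw [norm_mul, Real.norm_of_nonneg (hK_nonneg ξ τ hτ)]
    simp only [hnorm]
    have hmeas : Measurable fun ξ : ℝ => c * (1 + ξ ^ 2) ^ s := by fun_prop
    refine hf.norm.bdd_mul (c := c) hmeas.aestronglyMeasurable (Eventually.of_forall fun ξ => ?_)
    have : (1 + ξ ^ 2) ^ s ≤ 1 := Real.rpow_le_one_of_one_le_of_nonpos (by nlinarith) h2.le
    rw [Real.norm_of_nonneg (by positivity)]
    nlinarith
  have hinner : ∀ τ, (τ ^ 2 - 1) ^ s * ∫ ξ, τ / (ξ ^ 2 + τ ^ 2) * f ξ = ∫ ξ, K τ ξ * f ξ :=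
    fun τ => by simp only [K, ← integral_const_mul, mul_assoc]
  simp only [hinner]
  refine ⟨hF.integral_prod_left, ?_⟩
  rw [integral_integral_swap hF, ← integral_const_mul]
  refine integral_congr_ae (Eventually.of_forall fun ξ => ?_)
  dsimp only
  rw [integral_mul_const, hK_integral, mul_assoc]

/-- For `−1/2 < s < 0` and `u` Schwartz, the integral
`∫₁^∞ (τ²−1)^s Re T₂(iτ/2) dτ` converges absolutely and
`‖u‖²_{H^s} = −(2 sin(πs)/π) ∫₁^∞ (τ²−1)^s Re T₂(iτ/2) dτ`, where
`‖u‖²_{H^s} = ∫ (1+ξ²)^s |û(ξ)|² dξ`. -/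
theorem stmt_3 (u : SchwartzMap ℝ ℂ) (s : ℝ) (hs₁ : -(1 / 2 : ℝ) < s) (hs₂ : s < 0) :
    IntegrableOn
        (fun τ : ℝ => (τ ^ 2 - 1) ^ s * (T₂ (⇑u) (Complex.I * (τ : ℂ) / 2)).re)
        (Set.Ioi (1 : ℝ)) ∧
      (∫ ξ : ℝ, (1 + ξ ^ 2) ^ s * ‖unitaryFT (⇑u) ξ‖ ^ 2)
        = -(2 * Real.sin (Real.pi * s) / Real.pi) *
            ∫ τ in Set.Ioi (1 : ℝ),
              (τ ^ 2 - 1) ^ s * (T₂ (⇑u) (Complex.I * (τ : ℂ) / 2)).re := by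
  have hf := integrable_norm_unitaryFT_sq u
  have hre : EqOn (fun τ : ℝ => (τ ^ 2 - 1) ^ s * (T₂ u (I * τ / 2)).re)
      (fun τ => (τ ^ 2 - 1) ^ s * ∫ ξ, τ / (ξ ^ 2 + τ ^ 2) * ‖unitaryFT u ξ‖ ^ 2) (Ioi 1) :=
    fun τ hτ => congrArg _ (re_T₂_I_mul_div_two hf (lt_trans one_pos hτ).ne')
  obtain ⟨hint, heq⟩ := integral_Ioi_one_sq_sub_one_rpow_mul_integral hf (by linarith) hs₂
  refine ⟨hint.congr_fun hre.symm measurableSet_Ioi, ?_⟩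
  have hsin : Real.sin (π * s) ≠ 0 :=
    (Real.sin_neg_of_neg_of_neg_pi_lt (by nlinarith [Real.pi_pos]) (by nlinarith [Real.pi_pos])).ne
  rw [setIntegral_congr_fun measurableSet_Ioi hre, heq, mul_add, mul_one, Real.sin_add_pi]
  field_simp
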